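/- Let (V_0, (.,.), A_0) be a Riemannian Einstein model with Einstein constant s, and let (V_1, <.,.>, A_1) be the complexified model with A_1 = Im(A_0^C) and <.,.> = Re((.,.)_C). Then A_1(rho_1 x, y, z, w) = A_1(x, y, z, rho_1 w) for all x,y,z,w in V_1, where rho_1 is the Ricci operator of A_1. Consequently the model (V_1, <.,.>, A_1) is Jacobi--Videv: rho_1 commutes with all Jacobi operators. -/

import Mathlib

noncomputable section

/-- The imaginary part of the complex multilinear extension of `A` to the
complexification, where `V × V` models `V ⊕ iV`. -/
def cxCurv {V : Type*} [AddCommGroup V] [Module ℝ V]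
    (A : V →ₗ[ℝ] V →ₗ[ℝ] V →ₗ[ℝ] V →ₗ[ℝ] ℝ) (u₁ u₂ u₃ u₄ : V × V) : ℝ :=
  (A u₁.2 u₂.1 u₃.1 u₄.1 + A u₁.1 u₂.2 u₃.1 u₄.1 + A u₁.1 u₂.1 u₃.2 u₄.1 +
      A u₁.1 u₂.1 u₃.1 u₄.2)
    - (A u₁.1 u₂.2 u₃.2 u₄.2 + A u₁.2 u₂.1 u₃.2 u₄.2 + A u₁.2 u₂.2 u₃.1 u₄.2 +
      A u₁.2 u₂.2 u₃.2 u₄.1)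

/-- The real part of the complex bilinear extension of the inner product;
a neutral signature inner product on `V × V`. -/
def cxForm {V : Type*} [AddCommGroup V] [Module ℝ V]
    (B : LinearMap.BilinForm ℝ V) (u v : V × V) : ℝ :=
  B u.1 v.1 - B u.2 v.2

/-- The Ricci tensor of `cxCurv A` computed with respect to the pseudo-orthonormal
basis `{(bₖ,0), (0,bₖ)}` of `V × V` (traces with signs). -/
def cxRicci {V : Type*} [AddCommGroup V] [Module ℝ V] {n : ℕ}
    (b : Module.Basis (Fin n) ℝ V)
    (A : V →ₗ[ℝ] V →ₗ[ℝ] V →ₗ[ℝ] V →ₗ[ℝ] ℝ) (u v : V × V) : ℝ :=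
  ∑ k, (cxCurv A u (b k, 0) (b k, 0) v - cxCurv A u (0, b k) (0, b k) v)

/-!
The complex structure of `V × V ≅ V ⊗ ℂ` is `I (x, y) = (-y, x)`. Contracting the Einstein
condition shows that the Ricci operator of the complexified model is `-2s • I`. Since `A₁` is the
imaginary part of a complex multilinear form, `I` may be moved from the first slot of `A₁` to the
last, which is the first claim; it also makes `I` self-adjoint for `⟨·,·⟩`, and together these
give `ρ₁ ∘ J(ξ) = J(ξ) ∘ ρ₁` after pairing both sides with an arbitrary vector.
-/

section

variable {V : Type*} [AddCommGroup V] [Module ℝ V]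

def cxI : V × V →ₗ[ℝ] V × V := (-LinearMap.snd ℝ V V).prod (LinearMap.fst ℝ V V)

@[simp]
lemma cxI_apply (u : V × V) : cxI u = (-u.2, u.1) := rfl

lemma cxCurv_smul_cxI_left (A : V →ₗ[ℝ] V →ₗ[ℝ] V →ₗ[ℝ] V →ₗ[ℝ] ℝ) (c : ℝ)
    (x y z w : V × V) :
    cxCurv A ((c • cxI) x) y z w = cxCurv A x y z ((c • cxI) w) := by
  simp only [cxCurv, LinearMap.smul_apply, cxI_apply, Prod.smul_mk, smul_neg, ← neg_smul,
    map_smul, smul_eq_mul]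
  ring

lemma cxForm_smul_cxI_left (B : LinearMap.BilinForm ℝ V) (c : ℝ) (u v : V × V) :
    cxForm B ((c • cxI) u) v = cxForm B u ((c • cxI) v) := by
  simp only [cxForm, LinearMap.smul_apply, cxI_apply, Prod.smul_fst, Prod.smul_snd, map_smul,
    map_neg, LinearMap.neg_apply, smul_eq_mul, smul_neg]
  ring

lemma cxForm_left_injective {B : LinearMap.BilinForm ℝ V} (hB : B.SeparatingLeft)
    {p q : V × V} (h : ∀ v, cxForm B p v = cxForm B q v) : p = q := by
  have separates {x y : V} (hxy : ∀ w, B x w = B y w) : x = y :=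
    sub_eq_zero.mp <| hB _ fun w => by rw [map_sub, LinearMap.sub_apply, hxy, sub_self]
  refine Prod.ext (separates fun w => ?_) (separates fun w => ?_)
  · simpa [cxForm] using h (w, 0)
  · simpa [cxForm] using h (0, w)

lemma cxRicci_eq_cxForm_smul_cxI {n : ℕ} (b : Module.Basis (Fin n) ℝ V)
    {B : LinearMap.BilinForm ℝ V} {A : V →ₗ[ℝ] V →ₗ[ℝ] V →ₗ[ℝ] V →ₗ[ℝ] ℝ} {s : ℝ}
    (hEinstein : ∀ x y, (∑ k, A x (b k) (b k) y) = s * B x y) (u v : V × V) :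
    cxRicci b A u v = cxForm B ((-(2 * s) • cxI) u) v := by
  have summand (k : Fin n) :
      cxCurv A u (b k, 0) (b k, 0) v - cxCurv A u (0, b k) (0, b k) v
        = 2 * A u.2 (b k) (b k) v.1 + 2 * A u.1 (b k) (b k) v.2 := by
    simp only [cxCurv, map_zero, LinearMap.zero_apply]
    ring
  simp only [cxRicci, summand, Finset.sum_add_distrib, ← Finset.mul_sum, hEinstein, cxForm,
    LinearMap.smul_apply, cxI_apply, Prod.smul_fst, Prod.smul_snd, map_smul, map_neg,
    LinearMap.neg_apply, smul_eq_mul, smul_neg]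
  ring

lemma smul_cxI_comp_eq_comp_smul_cxI {B : LinearMap.BilinForm ℝ V} (hB : B.SeparatingLeft)
    {A : V →ₗ[ℝ] V →ₗ[ℝ] V →ₗ[ℝ] V →ₗ[ℝ] ℝ} (c : ℝ) {Jop : V × V → V × V →ₗ[ℝ] V × V}
    (hJop : ∀ ξ u v, cxForm B (Jop ξ u) v = cxCurv A u ξ ξ v) (ξ : V × V) :
    (c • cxI) ∘ₗ Jop ξ = Jop ξ ∘ₗ (c • cxI) :=
  LinearMap.ext fun u => cxForm_left_injective hB fun v => by
    rw [LinearMap.comp_apply, LinearMap.comp_apply, cxForm_smul_cxI_left, hJop, hJop,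
      cxCurv_smul_cxI_left]

end

theorem stmt_7_general {V : Type*} [AddCommGroup V] [Module ℝ V]
    {n : ℕ} (b : Module.Basis (Fin n) ℝ V)
    (B : LinearMap.BilinForm ℝ V) (hBpos : ∀ x, x ≠ 0 → 0 < B x x)
    (A : V →ₗ[ℝ] V →ₗ[ℝ] V →ₗ[ℝ] V →ₗ[ℝ] ℝ)
    (s : ℝ) (hEinstein : ∀ x y, (∑ k, A x (b k) (b k) y) = s * B x y)
    (rho1 : (V × V) →ₗ[ℝ] (V × V))
    (hrho1 : ∀ u v, cxForm B (rho1 u) v = cxRicci b A u v)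
    (Jop : (V × V) → (V × V) →ₗ[ℝ] (V × V))
    (hJop : ∀ ξ u v, cxForm B (Jop ξ u) v = cxCurv A u ξ ξ v) :
    (∀ x y z w : V × V, cxCurv A (rho1 x) y z w = cxCurv A x y z (rho1 w)) ∧
    (∀ ξ : V × V, rho1 ∘ₗ Jop ξ = Jop ξ ∘ₗ rho1) := by
  have hB : B.SeparatingLeft := LinearMap.BilinForm.separatingLeft_of_anisotropic
    fun x hx => by_contra fun hne => (hBpos x hne).ne' hx
  obtain rfl : rho1 = -(2 * s) • cxI := LinearMap.ext fun u => cxForm_left_injective hB fun v => by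
    rw [hrho1, cxRicci_eq_cxForm_smul_cxI b hEinstein]
  exact ⟨cxCurv_smul_cxI_left A _, smul_cxI_comp_eq_comp_smul_cxI hB _ hJop⟩

/-- For a Riemannian Einstein model with Einstein constant `s`,
the Ricci operator `rho₁` of the complexified model `(V × V, cxForm B, cxCurv A)`
satisfies `A₁(rho₁ x, y, z, w) = A₁(x, y, z, rho₁ w)` for all vectors; hence the
complexified model is Jacobi--Videv: `rho₁` commutes with every Jacobi operator. -/
theorem stmt_7 {V : Type*} [AddCommGroup V] [Module ℝ V] [FiniteDimensional ℝ V]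
    {n : ℕ} (b : Module.Basis (Fin n) ℝ V)
    (B : LinearMap.BilinForm ℝ V) (hBsymm : ∀ x y, B x y = B y x)
    (hBpos : ∀ x, x ≠ 0 → 0 < B x x)
    (hON : ∀ i j, B (b i) (b j) = if i = j then 1 else 0)
    (A : V →ₗ[ℝ] V →ₗ[ℝ] V →ₗ[ℝ] V →ₗ[ℝ] ℝ)
    (hpair : ∀ x y z w, A x y z w = A z w x y)
    (hanti : ∀ x y z w, A x y z w = -A y x z w)
    (hbianchi : ∀ x y z w, A x y z w + A y z x w + A z x y w = 0)
    (s : ℝ) (hEinstein : ∀ x y, (∑ k, A x (b k) (b k) y) = s * B x y)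
    (rho1 : (V × V) →ₗ[ℝ] (V × V))
    (hrho1 : ∀ u v, cxForm B (rho1 u) v = cxRicci b A u v)
    (Jop : (V × V) → (V × V) →ₗ[ℝ] (V × V))
    (hJop : ∀ ξ u v, cxForm B (Jop ξ u) v = cxCurv A u ξ ξ v) :
    (∀ x y z w : V × V, cxCurv A (rho1 x) y z w = cxCurv A x y z (rho1 w)) ∧
    (∀ ξ : V × V, rho1 ∘ₗ Jop ξ = Jop ξ ∘ₗ rho1) :=
  stmt_7_general b B hBpos A s hEinstein rho1 hrho1 Jop hJop
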